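/- Let f: 𝔻 → ℂ be holomorphic and suppose f restricted to the circle decomposes as f = g + h with g ∈ L¹(S¹) and h ∈ H^{-1/2}(S¹) (as boundary values). Then |f(0)| ≤ C(‖g‖_{L¹(S¹)} + ‖h‖_{H^{-1/2}(S¹)}) for an absolute constant C, and hence |f(0)| ≤ C‖f‖_{L¹+H^{-1/2}(S¹)}. -/

import Mathlib

open MeasureTheory Metric Complex

instance : Fact (0 < 2 * Real.pi) := ⟨by positivity⟩

/-- The boundary restriction `θ ↦ f (r e^{iθ})` as a function on `S¹ = ℝ/2πℤ`. -/
noncomputable def bdry (f : ℂ → ℂ) (r : ℝ) : AddCircle (2 * Real.pi) → ℂ :=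
  fun θ => f ((r : ℂ) * (AddCircle.toCircle θ : ℂ))

/-- The `L¹ + H^{-1/2}(S¹)` norm. -/
noncomputable def L1HneghalfNorm (v : AddCircle (2 * Real.pi) → ℂ) : ℝ :=
  sInf {s : ℝ | ∃ g h : AddCircle (2 * Real.pi) → ℂ,
    (∀ x, v x = g x + h x) ∧ Integrable g volume ∧ Integrable h volume ∧
    Summable (fun n : ℤ => ‖fourierCoeff h n‖ ^ 2 / (1 + |(n : ℝ)|)) ∧
    s = (∫ x, ‖g x‖ ∂volume) +
        Real.sqrt (∑' n : ℤ, ‖fourierCoeff h n‖ ^ 2 / (1 + |(n : ℝ)|))}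

lemma mean_value (f : ℂ → ℂ) (hd : DifferentiableOn ℂ f (ball (0:ℂ) 1))
    (hc : ContinuousOn f (closedBall (0:ℂ) 1)) :
    f 0 = (2 * Real.pi : ℂ)⁻¹ * ∫ x : AddCircle (2 * Real.pi), bdry f 1 x ∂volume := by
  have hdc : DiffContOnCl ℂ f (ball (0:ℂ) 1) :=
    ⟨hd, by rwa [closure_ball (0:ℂ) one_ne_zero]⟩
  have h1 := hdc.circleIntegral_sub_inv_smul (mem_ball_self one_pos)
  rw [circleIntegral] at h1
  have h2 : ∀ θ : ℝ, deriv (circleMap 0 1) θ • ((circleMap 0 1 θ - 0)⁻¹ • f (circleMap 0 1 θ))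
      = I * f (circleMap 0 1 θ) := by
    intro θ
    have hz : circleMap 0 1 θ ≠ 0 := circleMap_ne_center one_ne_zero
    rw [deriv_circleMap]
    field_simp [smul_eq_mul]
    simp only [smul_eq_mul, sub_zero, one_div]
    rw [mul_comm (circleMap 0 1 θ) I, mul_assoc, mul_inv_cancel_left₀ hz]
  simp only [h2] at h1
  rw [intervalIntegral.integral_const_mul] at h1
  have h3 : ∫ θ in (0:ℝ)..2 * Real.pi, f (circleMap 0 1 θ)
      = ∫ x : AddCircle (2 * Real.pi), bdry f 1 x ∂volume := by
    rw [← AddCircle.intervalIntegral_preimage (2 * Real.pi) 0 (bdry f 1), zero_add]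
    refine intervalIntegral.integral_congr fun θ _ => ?_
    simp [bdry, AddCircle.toCircle_apply_mk, circleMap, Circle.coe_exp,
      div_self (mul_ne_zero two_ne_zero Real.pi_ne_zero)]
  rw [h3] at h1
  rw [smul_eq_mul] at h1
  have h4 : (∫ x : AddCircle (2 * Real.pi), bdry f 1 x ∂volume) = (2 * Real.pi : ℂ) * f 0 := by
    apply mul_left_cancel₀ I_ne_zero
    rw [h1]; ring
  rw [h4]
  have : (2 * Real.pi : ℂ) ≠ 0 := by simp [Real.pi_ne_zero]
  field_simp

lemma key (f : ℂ → ℂ) (g h : AddCircle (2 * Real.pi) → ℂ)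
    (hd : DifferentiableOn ℂ f (ball (0:ℂ) 1))
    (hc : ContinuousOn f (closedBall (0:ℂ) 1))
    (hdec : ∀ x : AddCircle (2 * Real.pi), bdry f 1 x = g x + h x)
    (hg : Integrable g volume) (hh : Integrable h volume)
    (hsum : Summable (fun n : ℤ => ‖fourierCoeff h n‖ ^ 2 / (1 + |(n : ℝ)|))) :
    ‖f 0‖ ≤ (∫ x, ‖g x‖ ∂volume) +
        Real.sqrt (∑' n : ℤ, ‖fourierCoeff h n‖ ^ 2 / (1 + |(n : ℝ)|)) := by
  have hsplit : (∫ x : AddCircle (2 * Real.pi), bdry f 1 x ∂volume)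
      = (∫ x, g x ∂volume) + ∫ x, h x ∂volume := by
    rw [show bdry f 1 = fun x => g x + h x from funext hdec]
    exact integral_add hg hh
  have hmv := mean_value f hd hc
  rw [hsplit, mul_add] at hmv
  -- Fourier coefficient 0 of h
  have hpos : (0:ℝ) < 2 * Real.pi := by positivity
  have hvol : (∫ x, h x ∂volume) = (2 * Real.pi : ℝ) • ∫ x, h x ∂AddCircle.haarAddCircle := by
    rw [AddCircle.volume_eq_smul_haarAddCircle, integral_smul_measure,
      ENNReal.toReal_ofReal hpos.le]
  have hF0 : fourierCoeff h 0 = ∫ x, h x ∂AddCircle.haarAddCircle := by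
    simp [fourierCoeff]
  have hnorm2pi : ‖(2 * Real.pi : ℂ)⁻¹‖ = (2 * Real.pi)⁻¹ := by
    rw [norm_inv, show (2 * Real.pi : ℂ) = ((2 * Real.pi : ℝ) : ℂ) by push_cast; ring,
      Complex.norm_real, Real.norm_eq_abs, abs_of_pos hpos]
  have hgbd : ‖(2 * Real.pi : ℂ)⁻¹ * ∫ x, g x ∂volume‖ ≤ ∫ x, ‖g x‖ ∂volume := by
    rw [norm_mul, hnorm2pi]
    calc (2 * Real.pi)⁻¹ * ‖∫ x, g x ∂volume‖
        ≤ 1 * ∫ x, ‖g x‖ ∂volume := by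
          apply mul_le_mul _ (norm_integral_le_integral_norm g) (norm_nonneg _) zero_le_one
          rw [inv_le_one_iff₀]; right; linarith [Real.two_le_pi]
      _ = ∫ x, ‖g x‖ ∂volume := one_mul _
  have hhbd : ‖(2 * Real.pi : ℂ)⁻¹ * ∫ x, h x ∂volume‖
      ≤ Real.sqrt (∑' n : ℤ, ‖fourierCoeff h n‖ ^ 2 / (1 + |(n : ℝ)|)) := by
    have heq : (2 * Real.pi : ℂ)⁻¹ * ∫ x, h x ∂volume = fourierCoeff h 0 := by
      rw [hvol, hF0]
      rw [show ((2 * Real.pi : ℝ) • ∫ x, h x ∂AddCircle.haarAddCircle)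
          = ((2 * Real.pi : ℝ) : ℂ) * ∫ x, h x ∂AddCircle.haarAddCircle by
        rw [Complex.real_smul]]
      rw [show (2 * Real.pi : ℂ) = ((2 * Real.pi : ℝ) : ℂ) by push_cast; ring, ← mul_assoc,
        inv_mul_cancel₀ (by exact_mod_cast hpos.ne'), one_mul]
    rw [heq]
    have hle : ‖fourierCoeff h 0‖ ^ 2 / (1 + |((0:ℤ) : ℝ)|)
        ≤ ∑' n : ℤ, ‖fourierCoeff h n‖ ^ 2 / (1 + |(n : ℝ)|) :=
      Summable.le_tsum hsum 0 fun n _ => by positivity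
    simp only [Int.cast_zero, abs_zero, add_zero, div_one] at hle
    calc ‖fourierCoeff h 0‖ = Real.sqrt (‖fourierCoeff h 0‖ ^ 2) := by
          rw [Real.sqrt_sq (norm_nonneg _)]
      _ ≤ _ := Real.sqrt_le_sqrt hle
  calc ‖f 0‖ ≤ ‖(2 * Real.pi : ℂ)⁻¹ * ∫ x, g x ∂volume‖
        + ‖(2 * Real.pi : ℂ)⁻¹ * ∫ x, h x ∂volume‖ := by
        rw [hmv]; exact norm_add_le _ _
    _ ≤ _ := add_le_add hgbd hhbd

/-- if `f` is holomorphic on `𝔻`, continuous up to the boundary,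
and its boundary values decompose as `f = g + h` with `g ∈ L¹(S¹)` and
`h ∈ H^{-1/2}(S¹)`, then `|f(0)| ≤ C (‖g‖_{L¹} + ‖h‖_{H^{-1/2}})` for an
absolute constant `C`, and hence `|f(0)| ≤ C ‖f‖_{L¹+H^{-1/2}(S¹)}`. -/
theorem value_at_zero_bound :
    ∃ C : ℝ, 0 < C ∧
      ∀ (f : ℂ → ℂ) (g h : AddCircle (2 * Real.pi) → ℂ),
        DifferentiableOn ℂ f (ball (0 : ℂ) 1) →
        ContinuousOn f (closedBall (0 : ℂ) 1) →
        (∀ x : AddCircle (2 * Real.pi), bdry f 1 x = g x + h x) →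
        Integrable g volume → Integrable h volume →
        Summable (fun n : ℤ => ‖fourierCoeff h n‖ ^ 2 / (1 + |(n : ℝ)|)) →
        ‖f 0‖ ≤ C * ((∫ x, ‖g x‖ ∂volume) +
            Real.sqrt (∑' n : ℤ, ‖fourierCoeff h n‖ ^ 2 / (1 + |(n : ℝ)|))) ∧
        ‖f 0‖ ≤ C * L1HneghalfNorm (bdry f 1) := by
  refine ⟨1, one_pos, fun f g h hd hc hdec hg hh hsum => ?_⟩
  refine ⟨by rw [one_mul]; exact key f g h hd hc hdec hg hh hsum, ?_⟩
  rw [one_mul, L1HneghalfNorm]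
  refine le_csInf ⟨_, g, h, hdec, hg, hh, hsum, rfl⟩ ?_
  rintro s ⟨g', h', hdec', hg', hh', hsum', rfl⟩
  exact key f g' h' hd hc hdec' hg' hh' hsum'
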